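/- For every i ≥ 1, there exists a unique subset S of P^(i) such that P^(i) is the union of S and P_S = {p_n : n ∈ S}, and S ∩ P_S = ∅. (That is, each higher-order prime set P^(i) admits a unique partition into an index set S and its indexed set P_S.) -/
import Mathlib


/-- `nthPrime n` is the `n`-th prime number, 1-indexed: `nthPrime 1 = 2`, `nthPrime 2 = 3`, ... -/
noncomputable def nthPrime (n : ℕ) : ℕ := Nat.nth Nat.Prime (n - 1)

/-- For a set `S` of positive integers, `indexedSet S = {p_n : n ∈ S}`. -/
def indexedSet (S : Set ℕ) : Set ℕ := {m | ∃ n ∈ S, m = nthPrime n}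

/-- The higher-order prime sets: `P 1` is the set of all primes, and `P (k+1) = indexedSet (P k)`
for `k ≥ 1`.  (`P 0` is a junk value.) -/
def P : ℕ → Set ℕ
  | 0 => ∅
  | 1 => {p | p.Prime}
  | (k + 2) => indexedSet (P (k + 1))

lemma nth_prime_ge (k : ℕ) : k + 2 ≤ Nat.nth Nat.Prime k := by
  induction k with
  | zero => simpa using (Nat.nth_mem_of_infinite Nat.infinite_setOf_prime 0).two_le
  | succ n ih =>
      have h : Nat.nth Nat.Prime n < Nat.nth Nat.Prime (n + 1) :=
        (Nat.nth_lt_nth Nat.infinite_setOf_prime).2 (Nat.lt_succ_self n)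
      omega

lemma lt_nthPrime {n : ℕ} (hn : 1 ≤ n) : n < nthPrime n := by
  have := nth_prime_ge (n - 1)
  unfold nthPrime
  omega

lemma indexedSet_prime {S : Set ℕ} {m : ℕ} (hm : m ∈ indexedSet S) : m.Prime := by
  obtain ⟨n, -, rfl⟩ := hm
  exact Nat.nth_mem_of_infinite Nat.infinite_setOf_prime _

lemma indexedSet_mono {S T : Set ℕ} (h : S ⊆ T) : indexedSet S ⊆ indexedSet T := by
  rintro m ⟨n, hn, rfl⟩; exact ⟨n, h hn, rfl⟩

lemma P_subset_prime : ∀ i, 1 ≤ i → P i ⊆ {p | p.Prime}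
  | 1, _ => fun _ h => h
  | (_ + 2), _ => fun _ h => indexedSet_prime h

lemma P_succ_subset : ∀ i, 1 ≤ i → P (i + 1) ⊆ P i
  | 1, _ => fun _ h => indexedSet_prime h
  | (k + 2), _ => indexedSet_mono (P_succ_subset (k + 1) (Nat.le_add_left 1 k))

def memS (A : Set ℕ) (m : ℕ) : Prop :=
  m ∈ A ∧ ∀ n, n < m → ¬(memS A n ∧ m = nthPrime n)

lemma memS_iff (A : Set ℕ) (m : ℕ) :
    memS A m ↔ m ∈ A ∧ ∀ n, n < m → ¬(memS A n ∧ m = nthPrime n) := by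
  rw [memS]

/-- For every `i ≥ 1`, there exists a unique subset `S` of `P^(i)` such that `P^(i)` is the
union of `S` and `P_S = {p_n : n ∈ S}`, with `S ∩ P_S = ∅`. -/
theorem unique_higher_order_prime_partition (i : ℕ) (hi : 1 ≤ i) :
    ∃! S : Set ℕ, S ⊆ P i ∧ P i = S ∪ indexedSet S ∧ S ∩ indexedSet S = ∅ := by
  have hPprime : P i ⊆ {p | p.Prime} := P_subset_prime i hi
  have hlt : ∀ n ∈ P i, n < nthPrime n := fun n hn =>
    lt_nthPrime (le_trans one_le_two (hPprime hn).two_le)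
  have hPsucc : indexedSet (P i) ⊆ P i := by
    obtain ⟨j, rfl⟩ : ∃ j, i = j + 1 := ⟨i - 1, by omega⟩
    exact P_succ_subset (j + 1) (by omega)
  -- generic inclusion lemma for uniqueness
  have incl : ∀ S T : Set ℕ, S ⊆ P i → P i = S ∪ indexedSet S → S ∩ indexedSet S = ∅ →
      T ⊆ P i → P i = T ∪ indexedSet T → T ∩ indexedSet T = ∅ → S ⊆ T := by
    intro S T hS1 hS2 hS3 hT1 hT2 hT3 m
    induction m using Nat.strong_induction_on with
    | _ m ih =>
      intro hmS
      have hmP : m ∈ P i := hS1 hmS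
      have hm' : m ∈ T ∪ indexedSet T := hT2 ▸ hmP
      rcases hm' with h | ⟨n, hnT, rfl⟩
      · exact h
      · have hnP : n ∈ P i := hT1 hnT
        have hn' : n ∈ S ∪ indexedSet S := hS2 ▸ hnP
        rcases hn' with hnS | ⟨k, hkS, rfl⟩
        · have : nthPrime n ∈ S ∩ indexedSet S := ⟨hmS, ⟨n, hnS, rfl⟩⟩
          simp [hS3] at this
        · have hkP : k ∈ P i := hS1 hkS
          have hkT : k ∈ T := ih k (lt_trans (hlt k hkP) (hlt _ hnP)) hkS
          have : nthPrime k ∈ T ∩ indexedSet T := ⟨hnT, ⟨k, hkT, rfl⟩⟩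
          simp [hT3] at this
  set S0 : Set ℕ := {m | memS (P i) m} with hS0
  have hsub : S0 ⊆ P i := fun m hm => ((memS_iff _ _).1 hm).1
  have hcov : P i = S0 ∪ indexedSet S0 := by
    ext m
    constructor
    · intro hm
      by_cases h : memS (P i) m
      · exact Or.inl h
      · right
        rw [memS_iff] at h
        push_neg at h
        obtain ⟨n, hn, hmem, heq⟩ := h hm
        exact ⟨n, hmem, heq⟩
    · rintro (h | h)
      · exact hsub h
      · exact hPsucc (indexedSet_mono hsub h)
  have hdisj : S0 ∩ indexedSet S0 = ∅ := by
    ext m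
    simp only [Set.mem_inter_iff, Set.mem_empty_iff_false, iff_false]
    rintro ⟨hm1, n, hn, rfl⟩
    have hnP : n ∈ P i := hsub hn
    exact (((memS_iff _ _).1 hm1).2 n (hlt n hnP)) ⟨hn, rfl⟩
  refine ⟨S0, ⟨hsub, hcov, hdisj⟩, ?_⟩
  rintro T ⟨hT1, hT2, hT3⟩
  exact Set.Subset.antisymm (incl T S0 hT1 hT2 hT3 hsub hcov hdisj)
    (incl S0 T hsub hcov hdisj hT1 hT2 hT3)
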